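/- arXiv:math/0408283 — 2 statements merged into one kernel-verified Lean document; each statement's English description precedes it below -/
import Mathlib

section
/- Every point of the Segre cubic {Σxi = 0, Σxi^3 = 0} ⊂ P^5 at which the partial derivatives of Σxi^3 are proportional to (1,...,1) is, up to scaling and permutation of coordinates, the point (1,1,1,−1,−1,−1); hence the Segre cubic has exactly 10 singular points. -/
/-!
Proportionality of the gradient `(3xᵢ²)` to `(1, …, 1)` says that all `xᵢ²` agree, so
`x = t • (±1, …, ±1)` with `t ≠ 0`; then `∑ xᵢ = 0` forces exactly three plus signs, and
`∑ xᵢ³ = t³ ∑ (±1) = 0` holds automatically. Two sign vectors span the same line iff their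
sets of plus signs are equal or complementary, so the singular points correspond to the
3-element subsets of `Fin 6` containing `0`, of which there are `C(5, 2) = 10`.
-/

open Finset

namespace SegreCubic

variable {ι k : Type*} [DecidableEq ι]

section Ring

variable [Ring k]

variable (k) in
def signVec (S : Finset ι) : ι → k := fun i => if i ∈ S then 1 else -1

theorem signVec_sq (S : Finset ι) (i : ι) : signVec k S i ^ 2 = 1 := by
  unfold signVec; split <;> simp

theorem signVec_pow_three (S : Finset ι) (i : ι) :
    signVec k S i ^ 3 = signVec k S i := by
  unfold signVec; split <;> norm_num

theorem signVec_compl [Fintype ι] (S : Finset ι) : signVec k Sᶜ = -signVec k S := by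
  funext i; by_cases hi : i ∈ S <;> simp [signVec, hi]

variable (k) in
theorem signVec_ne_zero [Nontrivial k] [Nonempty ι] (S : Finset ι) : signVec k S ≠ 0 := by
  intro h
  simpa [h] using signVec_sq (k := k) S (Classical.arbitrary ι)

theorem sum_signVec [Fintype ι] (S : Finset ι) : ∑ i, signVec k S i = #S - #Sᶜ := by
  simp [signVec, sum_ite, sub_eq_add_neg, compl_eq_univ_sdiff, filter_notMem_eq_sdiff]

theorem sum_signVec_eq_zero_iff [Fintype ι] [CharZero k] {S : Finset ι} :
    ∑ i, signVec k S i = 0 ↔ 2 * #S = Fintype.card ι := by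
  rw [sum_signVec, sub_eq_zero, Nat.cast_inj, ← card_add_card_compl S]
  omega

theorem signVec_eq_one_iff [CharZero k] {S : Finset ι} {i : ι} :
    signVec k S i = 1 ↔ i ∈ S := by
  unfold signVec; split <;> norm_num [*]

theorem signVec_injective [CharZero k] :
    Function.Injective (signVec k : Finset ι → ι → k) := by
  intro S T h
  ext i
  rw [← signVec_eq_one_iff (k := k), h, signVec_eq_one_iff]

theorem exists_perm_signVec_comp_eq {S T : Finset ι} (h : #S = #T) :
    ∃ σ : Equiv.Perm ι, ∀ i, signVec k T (σ i) = signVec k S i := by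
  obtain ⟨σ, rfl⟩ := Equiv.Perm.exists_map_finset_eq S T h
  exact ⟨σ, fun i => by simp [signVec]⟩

end Ring

section Field

variable [Field k] [Fintype ι]

theorem exists_eq_smul_signVec {x : ι → k} (hx : x ≠ 0) (hsq : ∀ i j, x i ^ 2 = x j ^ 2) :
    ∃ t : k, t ≠ 0 ∧ ∃ S : Finset ι, x = t • signVec k S := by
  classical
  obtain ⟨j, hj⟩ := Function.ne_iff.mp hx
  refine ⟨x j, hj, univ.filter (x · = x j), funext fun i => ?_⟩
  by_cases h : x i = x j
  · simp [signVec, h]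
  · simp [signVec, (sq_eq_sq_iff_eq_or_eq_neg.mp (hsq i j)).resolve_left h]

def IsSegreSingular (x : ι → k) : Prop :=
  ∑ i, x i = 0 ∧ ∑ i, x i ^ 3 = 0 ∧ ∃ c : k, ∀ i, 3 * x i ^ 2 = c

variable [CharZero k]

theorem isSegreSingular_iff {x : ι → k} (hx : x ≠ 0) :
    IsSegreSingular x ↔ ∃ t : k, t ≠ 0 ∧
      ∃ S : Finset ι, 2 * #S = Fintype.card ι ∧ x = t • signVec k S := by
  constructor
  · rintro ⟨hsum, -, c, hc⟩
    have hsq : ∀ i j, x i ^ 2 = x j ^ 2 := fun i j =>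
      mul_left_cancel₀ three_ne_zero ((hc i).trans (hc j).symm)
    obtain ⟨t, ht, S, rfl⟩ := exists_eq_smul_signVec hx hsq
    refine ⟨t, ht, S, (sum_signVec_eq_zero_iff (k := k)).mp ?_, rfl⟩
    simpa [← mul_sum, ht] using hsum
  · rintro ⟨t, -, S, hS, rfl⟩
    have hS' : ∑ i, signVec k S i = 0 := sum_signVec_eq_zero_iff.mpr hS
    refine ⟨?_, ?_, 3 * t ^ 2, fun i => ?_⟩
    · simp [← mul_sum, hS']
    · simp [mul_pow, signVec_pow_three, ← mul_sum, hS']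
    · simp [mul_pow, signVec_sq]

open Projectivization in
theorem mk_signVec_eq_mk_signVec_iff [Nonempty ι] {S T : Finset ι} :
    mk k (signVec k S) (signVec_ne_zero k S) = mk k (signVec k T) (signVec_ne_zero k T) ↔
      S = T ∨ S = Tᶜ := by
  rw [mk_eq_mk_iff']
  constructor
  · rintro ⟨a, ha⟩
    obtain ⟨i⟩ := ‹Nonempty ι›
    have hi : a * signVec k T i = signVec k S i := congrFun ha i
    have ha2 : a ^ 2 = 1 :=
      calc a ^ 2 = (a * signVec k T i) ^ 2 := by rw [mul_pow, signVec_sq, mul_one]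
        _ = 1 := by rw [hi, signVec_sq]
    rcases sq_eq_one_iff.mp ha2 with rfl | rfl
    · exact Or.inl (signVec_injective (by simpa using ha.symm))
    · exact Or.inr (signVec_injective (by simpa [signVec_compl] using ha.symm))
  · rintro (rfl | rfl)
    · exact ⟨1, one_smul _ _⟩
    · exact ⟨-1, by rw [signVec_compl, neg_one_smul]⟩

open Projectivization in
theorem setOf_isSegreSingular_eq_image [Nonempty ι] (i₀ : ι) :
    {p : Projectivization k (ι → k) |
        ∃ (x : ι → k) (hx : x ≠ 0), p = mk k x hx ∧ IsSegreSingular x} =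
      (fun S => mk k (signVec k S) (signVec_ne_zero k S)) ''
        {S | 2 * #S = Fintype.card ι ∧ i₀ ∈ S} := by
  ext p
  constructor
  · rintro ⟨x, hx, rfl, hsing⟩
    obtain ⟨t, ht, S, hS, rfl⟩ := (isSegreSingular_iff hx).mp hsing
    have hp : mk k (t • signVec k S) hx = mk k (signVec k S) (signVec_ne_zero k S) :=
      (mk_eq_mk_iff' _ _ _ _ _).mpr ⟨t, rfl⟩
    by_cases h₀ : i₀ ∈ S
    · exact ⟨S, ⟨hS, h₀⟩, hp.symm⟩
    · refine ⟨Sᶜ, ⟨?_, mem_compl.mpr h₀⟩, ?_⟩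
      · have := card_add_card_compl S
        omega
      · rw [hp, mk_signVec_eq_mk_signVec_iff]
        exact Or.inr rfl
  · rintro ⟨S, ⟨hS, -⟩, rfl⟩
    exact ⟨signVec k S, signVec_ne_zero k S, rfl,
      (isSegreSingular_iff (signVec_ne_zero k S)).mpr
        ⟨1, one_ne_zero, S, hS, (one_smul _ _).symm⟩⟩

theorem injOn_mk_signVec [Nonempty ι] (i₀ : ι) :
    Set.InjOn (fun S => Projectivization.mk k (signVec k S) (signVec_ne_zero k S))
      {S | 2 * #S = Fintype.card ι ∧ i₀ ∈ S} := by
  rintro S ⟨-, hS⟩ T ⟨-, hT⟩ h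
  rcases mk_signVec_eq_mk_signVec_iff.mp h with h | rfl
  · exact h
  · exact absurd hT (mem_compl.mp hS)

end Field

end SegreCubic

open SegreCubic in
theorem segre_cubic_ten_singular_points_general {k : Type*} [Field k]
    [CharZero k] :
    (∀ x : Fin 6 → k, x ≠ 0 → ∑ i, x i = 0 → ∑ i, (x i) ^ 3 = 0 →
      (∃ c : k, ∀ i, 3 * (x i) ^ 2 = c) →
      ∃ t : k, t ≠ 0 ∧ ∃ σ : Equiv.Perm (Fin 6),
        ∀ i, x i = t * (![1, 1, 1, -1, -1, -1] : Fin 6 → k) (σ i)) ∧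
    {p : Projectivization k (Fin 6 → k) |
      ∃ (x : Fin 6 → k) (hx : x ≠ 0), p = Projectivization.mk k x hx ∧
        ∑ i, x i = 0 ∧ ∑ i, (x i) ^ 3 = 0 ∧
        ∃ c : k, ∀ i, 3 * (x i) ^ 2 = c}.ncard = 10 := by
  have h_std : (![1, 1, 1, -1, -1, -1] : Fin 6 → k) = signVec k {0, 1, 2} := by
    funext i
    fin_cases i <;> simp [signVec]
  refine ⟨fun x hx h1 h3 hc => ?_, ?_⟩
  · obtain ⟨t, ht, S, hS, rfl⟩ := (isSegreSingular_iff hx).mp ⟨h1, h3, hc⟩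
    have hcard : #S = #({0, 1, 2} : Finset (Fin 6)) := by simp at hS ⊢; omega
    obtain ⟨σ, hσ⟩ := exists_perm_signVec_comp_eq (k := k) hcard
    exact ⟨t, ht, σ, fun i => by simp [h_std, hσ]⟩
  · change {p | ∃ (x : Fin 6 → k) (hx : x ≠ 0), _ ∧ IsSegreSingular x}.ncard = 10
    rw [setOf_isSegreSingular_eq_image 0, (injOn_mk_signVec 0).ncard_image,
      Set.ncard_eq_toFinset_card']
    decide

/-- Every singular point of the Segre cubic `{Σ xᵢ = 0, Σ xᵢ³ = 0} ⊂ P^5`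
(i.e. a point where the gradient of `Σ xᵢ³` is proportional to `(1,…,1)`) is,
up to scaling and permutation of coordinates, `(1,1,1,−1,−1,−1)`; hence the
Segre cubic has exactly 10 singular points. -/
theorem segre_cubic_ten_singular_points {k : Type*} [Field k] [IsAlgClosed k]
    [CharZero k] :
    (∀ x : Fin 6 → k, x ≠ 0 → ∑ i, x i = 0 → ∑ i, (x i) ^ 3 = 0 →
      (∃ c : k, ∀ i, 3 * (x i) ^ 2 = c) →
      ∃ t : k, t ≠ 0 ∧ ∃ σ : Equiv.Perm (Fin 6),
        ∀ i, x i = t * (![1, 1, 1, -1, -1, -1] : Fin 6 → k) (σ i)) ∧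
    {p : Projectivization k (Fin 6 → k) |
      ∃ (x : Fin 6 → k) (hx : x ≠ 0), p = Projectivization.mk k x hx ∧
        ∑ i, x i = 0 ∧ ∑ i, (x i) ^ 3 = 0 ∧
        ∃ c : k, ∀ i, 3 * (x i) ^ 2 = c}.ncard = 10 :=
  segre_cubic_ten_singular_points_general
end

section
/- The total number of double-sixes in the Schläfli graph of 27 lines is 36: one of the form (a_1...a_6; b_1...b_6), fifteen of the form (a_i, b_i, c_{kl}, c_{km}, c_{kn}, c_{kp}; a_k, b_k, c_{il}, c_{im}, c_{in}, c_{ip}) for pairs {i,k}, and twenty of the form (a_i, a_k, a_l, c_{mn}, c_{mp}, c_{np}; c_{kl}, c_{il}, c_{ik}, b_p, b_n, b_m) for 3-element subsets {i,k,l}. -/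
/-- The 27 lines on a cubic surface in Schläfli's notation:
`a i` and `b i` for `i ∈ Fin 6`, and `c s` for a 2-element subset `s` of
`Fin 6` (the line `c_{ij}` with `s = {i,j}`). -/
abbrev Line27 : Type := Fin 6 ⊕ Fin 6 ⊕ {s : Finset (Fin 6) // s.card = 2}

/-- The Schläfli incidence relation on the 27 lines:
`a_i` meets `b_j` iff `i ≠ j`; `a_i` (resp. `b_i`) meets `c_{jk}` iff
`i ∈ {j,k}`; `c_{ij}` meets `c_{kl}` iff `{i,j} ∩ {k,l} = ∅`; no two `a`'s and
no two `b`'s meet. -/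
def adj27 : Line27 → Line27 → Prop
  | Sum.inl i, Sum.inr (Sum.inl j) => i ≠ j
  | Sum.inr (Sum.inl i), Sum.inl j => i ≠ j
  | Sum.inl i, Sum.inr (Sum.inr s) => i ∈ s.1
  | Sum.inr (Sum.inr s), Sum.inl i => i ∈ s.1
  | Sum.inr (Sum.inl i), Sum.inr (Sum.inr s) => i ∈ s.1
  | Sum.inr (Sum.inr s), Sum.inr (Sum.inl i) => i ∈ s.1
  | Sum.inr (Sum.inr s), Sum.inr (Sum.inr t) => s.1 ∩ t.1 = ∅
  | _, _ => False

/-- The intersection graph of the 27 lines on a smooth cubic surface. -/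
def schlafliGraph : SimpleGraph Line27 where
  Adj := adj27
  symm := by
    constructor
    rintro (i | i | s) (j | j | t) h <;> simp_all [adj27]
    · exact Ne.symm h
    · exact Ne.symm h
    · rw [Finset.inter_comm]; exact h
  loopless := by
    constructor
    rintro (i | i | s) h <;> simp_all [adj27]
    have : s.1.Nonempty := Finset.card_pos.mp (by simp [s.2])
    exact absurd h (Finset.nonempty_iff_ne_empty.mp (by simpa using this))

/-- A double-six: a pair of disjoint 6-element independent sets of lines such
that the bipartite adjacency between them is the complement of a perfect
matching (given by a bijection `φ`): `s` meets `t` iff `t ≠ φ s`. -/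
def IsDoubleSix (S T : Finset Line27) : Prop :=
  S.card = 6 ∧ T.card = 6 ∧ Disjoint S T ∧
    (∀ u ∈ S, ∀ v ∈ S, ¬ schlafliGraph.Adj u v) ∧
    (∀ u ∈ T, ∀ v ∈ T, ¬ schlafliGraph.Adj u v) ∧
    ∃ φ : Line27 → Line27, Set.BijOn φ (S : Set Line27) (T : Set Line27) ∧
      ∀ u ∈ S, ∀ v ∈ T, (schlafliGraph.Adj u v ↔ v ≠ φ u)

/-! A double-six is determined by either of its halves: every line of `T` misses exactly one line
of `S`, so `T` consists of lines outside `S` meeting exactly five lines of `S`. A search through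
the independent sets of the Schläfli graph finds exactly 72 sixes of mutually skew lines, and for
each of them the lines outside it meeting exactly five of its lines form a double-six partner.
Hence the 72 sixes pair up into 36 double-sixes. -/

section

open Finset

theorem Set.exists_bijOn_iff_existsUnique_not {α β : Type*} [Nonempty β]
    {R : α → β → Prop} {S : Set α} {T : Set β} :
    (∃ φ : α → β, Set.BijOn φ S T ∧ ∀ u ∈ S, ∀ v ∈ T, (R u v ↔ v ≠ φ u)) ↔
      (∀ u ∈ S, ∃! v ∈ T, ¬ R u v) ∧ (∀ v ∈ T, ∃! u ∈ S, ¬ R u v) := by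
  simp_rw [← not_iff_not (a := R _ _), not_ne_iff]
  constructor
  · rintro ⟨φ, ⟨hmaps, hinj, hsurj⟩, hR⟩
    refine ⟨fun u hu => ⟨φ u, ⟨hmaps hu, (hR u hu _ (hmaps hu)).2 rfl⟩,
      fun v ⟨hv, huv⟩ => (hR u hu v hv).1 huv⟩, fun v hv => ?_⟩
    obtain ⟨u, hu, rfl⟩ := hsurj hv
    exact ⟨u, ⟨hu, (hR u hu _ hv).2 rfl⟩,
      fun w ⟨hw, hwv⟩ => hinj hw hu ((hR w hw _ hv).1 hwv).symm⟩
  · rintro ⟨hS, hT⟩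
    choose! φ hφ hφ_unique using hS
    refine ⟨φ, ⟨fun u hu => (hφ u hu).1, fun u hu w hw huw => ?_, fun v hv => ?_⟩,
      fun u hu v hv => ⟨fun huv => hφ_unique u hu v ⟨hv, huv⟩, fun h => h ▸ (hφ u hu).2⟩⟩
    · obtain ⟨x, -, hx⟩ := hT (φ u) (hφ u hu).1
      exact (hx u ⟨hu, (hφ u hu).2⟩).trans (hx w ⟨hw, huw ▸ (hφ w hw).2⟩).symm
    · obtain ⟨u, ⟨hu, huv⟩, -⟩ := hT v hv
      exact ⟨u, hu, (hφ_unique u hu v ⟨hv, huv⟩).symm⟩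

theorem Finset.card_filter_eq_one_iff {α : Type*} {s : Finset α} {p : α → Prop}
    [DecidablePred p] : #{a ∈ s | p a} = 1 ↔ ∃! a ∈ s, p a := by
  simp only [card_eq_one_iff_existsUnique, mem_filter]

namespace SimpleGraph

variable {α : Type*} [DecidableEq α] (G : SimpleGraph α) [DecidableRel G.Adj]

def indepSetsUpTo (k : ℕ) : List α → List (Finset α)
  | [] => [∅]
  | v :: l =>
    let P := indepSetsUpTo k l
    P ++ (P.filter fun s => #s < k ∧ ∀ x ∈ s, ¬ G.Adj v x).map (insert v)

variable {G} in
theorem mem_indepSetsUpTo {k : ℕ} {l : List α} {s : Finset α} (hk : #s ≤ k)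
    (hl : ∀ x ∈ s, x ∈ l) (hs : ∀ u ∈ s, ∀ v ∈ s, ¬ G.Adj u v) :
    s ∈ G.indepSetsUpTo k l := by
  induction l generalizing s with
  | nil =>
    obtain rfl : s = ∅ := eq_empty_of_forall_notMem fun x hx => by simpa using hl x hx
    simp [indepSetsUpTo]
  | cons v l ih =>
    have hl' : ∀ x ∈ s.erase v, x ∈ l := fun x hx =>
      (List.mem_cons.1 (hl x (mem_of_mem_erase hx))).resolve_left (ne_of_mem_erase hx)
    have herase : s.erase v ∈ G.indepSetsUpTo k l :=
      ih (card_erase_le.trans hk) hl' fun u hu w hw =>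
        hs u (mem_of_mem_erase hu) w (mem_of_mem_erase hw)
    simp only [indepSetsUpTo, List.mem_append, List.mem_map, List.mem_filter, decide_eq_true_eq]
    by_cases hv : v ∈ s
    · refine .inr ⟨s.erase v, ⟨herase, ?_, fun x hx => hs v hv x (mem_of_mem_erase hx)⟩,
        insert_erase hv⟩
      rw [card_erase_of_mem hv]
      have := card_pos.2 ⟨v, hv⟩
      omega
    · rw [erase_eq_of_notMem hv] at herase
      exact .inl herase

end SimpleGraph

instance : DecidableRel schlafliGraph.Adj
  | Sum.inl i, Sum.inr (Sum.inl j) => inferInstanceAs (Decidable (i ≠ j))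
  | Sum.inr (Sum.inl i), Sum.inl j => inferInstanceAs (Decidable (i ≠ j))
  | Sum.inl i, Sum.inr (Sum.inr s) => inferInstanceAs (Decidable (i ∈ s.1))
  | Sum.inr (Sum.inr s), Sum.inl i => inferInstanceAs (Decidable (i ∈ s.1))
  | Sum.inr (Sum.inl i), Sum.inr (Sum.inr s) => inferInstanceAs (Decidable (i ∈ s.1))
  | Sum.inr (Sum.inr s), Sum.inr (Sum.inl i) => inferInstanceAs (Decidable (i ∈ s.1))
  | Sum.inr (Sum.inr s), Sum.inr (Sum.inr t) => inferInstanceAs (Decidable (s.1 ∩ t.1 = ∅))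
  | Sum.inl _, Sum.inl _ => isFalse id
  | Sum.inr (Sum.inl _), Sum.inr (Sum.inl _) => isFalse id

-- Without this shortcut the search for `DecidableRel IsDoubleSix` runs out of budget. It is local
-- so that `{S, T}` in the main theorem keeps its usual instance.
local instance : DecidableEq Line27 := instDecidableEqSum

def allLines : List Line27 :=
  (List.finRange 6).map Sum.inl ++ (List.finRange 6).map (Sum.inr ∘ Sum.inl) ++
    (List.finRange 6).flatMap fun i => (List.finRange 6).filterMap fun j =>
      if h : i < j then some (Sum.inr (Sum.inr ⟨{i, j}, card_pair h.ne⟩)) else none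

theorem mem_allLines (x : Line27) : x ∈ allLines :=
  List.mem_toFinset.mp (by revert x; decide)

def skewSixes : List (Finset Line27) :=
  (schlafliGraph.indepSetsUpTo 6 allLines).filter (#· = 6)

def doubleSixPartner (S : Finset Line27) : Finset Line27 :=
  {v | v ∉ S ∧ #{u ∈ S | schlafliGraph.Adj u v} = 5}

theorem isDoubleSix_iff_card_filter {S T : Finset Line27} :
    IsDoubleSix S T ↔ #S = 6 ∧ #T = 6 ∧ Disjoint S T ∧
      (∀ u ∈ S, ∀ v ∈ S, ¬ schlafliGraph.Adj u v) ∧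
      (∀ u ∈ T, ∀ v ∈ T, ¬ schlafliGraph.Adj u v) ∧
      (∀ u ∈ S, #{v ∈ T | ¬ schlafliGraph.Adj u v} = 1) ∧
      (∀ v ∈ T, #{u ∈ S | ¬ schlafliGraph.Adj u v} = 1) := by
  have h := Set.exists_bijOn_iff_existsUnique_not (R := schlafliGraph.Adj)
    (S := (S : Set Line27)) (T := T)
  simp only [mem_coe] at h
  simp only [IsDoubleSix, h, card_filter_eq_one_iff]

set_option synthInstance.maxSize 256 in
instance : DecidableRel IsDoubleSix := fun _ _ =>
  decidable_of_iff _ isDoubleSix_iff_card_filter.symm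

theorem IsDoubleSix.ne {S T : Finset Line27} (h : IsDoubleSix S T) : S ≠ T := by
  rintro rfl
  obtain ⟨hS, -, hSS, -⟩ := h
  simp [disjoint_self.1 hSS] at hS

theorem IsDoubleSix.mem_skewSixes {S T : Finset Line27} (h : IsDoubleSix S T) :
    S ∈ skewSixes :=
  List.mem_filter.2
    ⟨SimpleGraph.mem_indepSetsUpTo h.1.le (fun x _ => mem_allLines x) h.2.2.2.1,
      decide_eq_true h.1⟩

theorem IsDoubleSix.subset_doubleSixPartner {S T : Finset Line27} (h : IsDoubleSix S T) :
    T ⊆ doubleSixPartner S := by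
  obtain ⟨hS, -, hST, -, -, -, hT⟩ := isDoubleSix_iff_card_filter.1 h
  intro v hv
  have hsplit := card_filter_add_card_filter_not (s := S) (schlafliGraph.Adj · v)
  rw [hT v hv, hS] at hsplit
  simp only [doubleSixPartner, mem_filter, mem_univ, true_and]
  exact ⟨disjoint_right.1 hST hv, by omega⟩

theorem isDoubleSix_doubleSixPartner {S : Finset Line27} (hS : S ∈ skewSixes) :
    IsDoubleSix S (doubleSixPartner S) :=
  have hcheck : skewSixes.all fun S => decide (IsDoubleSix S (doubleSixPartner S)) := by
    decide +kernel
  of_decide_eq_true (List.all_eq_true.1 hcheck S hS)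

theorem isDoubleSix_iff_mem_skewSixes {S T : Finset Line27} :
    IsDoubleSix S T ↔ S ∈ skewSixes ∧ T = doubleSixPartner S := by
  refine ⟨fun h => ⟨h.mem_skewSixes, eq_of_subset_of_card_le h.subset_doubleSixPartner ?_⟩, ?_⟩
  · rw [h.2.1, (isDoubleSix_doubleSixPartner h.mem_skewSixes).2.1]
  · rintro ⟨hS, rfl⟩
    exact isDoubleSix_doubleSixPartner hS

def doubleSixes : Finset (Finset (Finset Line27)) :=
  (skewSixes.map fun S => {S, doubleSixPartner S}).toFinset

theorem card_doubleSixes : #doubleSixes = 36 := by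
  decide +kernel

end

theorem coe_doubleSixes :
    (doubleSixes : Set (Finset (Finset Line27))) =
      {P | ∃ S T, P = {S, T} ∧ S ≠ T ∧ IsDoubleSix S T} := by
  ext P
  simp only [doubleSixes, List.coe_toFinset, List.mem_map]
  constructor
  · rintro ⟨S, hS, rfl⟩
    have h := isDoubleSix_doubleSixPartner hS
    exact ⟨S, doubleSixPartner S, rfl, h.ne, h⟩
  · rintro ⟨S, T, rfl, -, h⟩
    obtain ⟨hS, rfl⟩ := isDoubleSix_iff_mem_skewSixes.1 h
    exact ⟨S, hS, rfl⟩

/-- There are exactly 36 double-sixes (as unordered pairs) among the 27 lines: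
one of Schläfli's first type, fifteen of the second type and twenty of the
third type. -/
theorem thirty_six_double_sixes :
    {P : Finset (Finset Line27) |
      ∃ S T, P = {S, T} ∧ S ≠ T ∧ IsDoubleSix S T}.ncard = 36 := by
  rw [← coe_doubleSixes, Set.ncard_coe_finset, card_doubleSixes]
end
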